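/- Let s(x) = 1/(1 + exp(−x)) be the sigmoid function and SiLU(x) = x·s(x). Then for every x ∈ ℝ, |SiLU″(x)| ≤ 1. -/

import Mathlib

noncomputable def sigmoid (x : ℝ) : ℝ := 1 / (1 + Real.exp (-x))

noncomputable def SiLU (x : ℝ) : ℝ := x * sigmoid x

/-!
Writing `σ` for the sigmoid, `σ' = σ(1 - σ)` gives `SiLU″(x) = σ(1 - σ) (2 + x (1 - 2σ))`.
Since `σ` is increasing, `x (1 - 2σ) ≤ 0`, and `σ(1 - σ) ≤ 1/4`, so `SiLU″ ≤ 1/2`. From below,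
`|x (1 - 2σ)| ≤ |x|` and `σ(x)(1 - σ(x)) = σ(x) σ(-x) ≤ e^{-|x|}`, so `SiLU″ ≥ -|x| e^{-|x|} ≥ -1/e`.
-/

namespace Real

lemma sigmoid_le_exp (x : ℝ) : sigmoid x ≤ exp x := by
  have h : sigmoid x * exp (-x) ≤ 1 := sigmoid_mul_rexp_neg x ▸ sigmoid_le_one (-x)
  rwa [exp_neg, ← div_eq_mul_inv, div_le_one (exp_pos x)] at h

lemma sigmoid_mul_one_sub_le_quarter (x : ℝ) : sigmoid x * (1 - sigmoid x) ≤ 1 / 4 := by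
  nlinarith [sq_nonneg (2 * sigmoid x - 1)]

lemma sigmoid_mul_one_sub_le_exp_neg_abs (x : ℝ) :
    sigmoid x * (1 - sigmoid x) ≤ exp (-|x|) := by
  rw [← sigmoid_neg]
  rcases le_total 0 x with hx | hx
  · rw [abs_of_nonneg hx]
    calc sigmoid x * sigmoid (-x) ≤ 1 * exp (-x) :=
          mul_le_mul (sigmoid_le_one x) (sigmoid_le_exp (-x)) (sigmoid_pos _).le zero_le_one
      _ = exp (-x) := one_mul _
  · rw [abs_of_nonpos hx]
    calc sigmoid x * sigmoid (-x) ≤ exp x * 1 :=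
          mul_le_mul (sigmoid_le_exp x) (sigmoid_le_one (-x)) (sigmoid_pos _).le (exp_pos x).le
      _ = exp (- -x) := by rw [mul_one, neg_neg]

lemma mul_one_sub_two_mul_sigmoid_nonpos (x : ℝ) : x * (1 - 2 * sigmoid x) ≤ 0 := by
  have h : 1 - 2 * sigmoid x = sigmoid (-x) - sigmoid x := by rw [sigmoid_neg]; ring
  rw [h]
  rcases le_total 0 x with hx | hx
  · exact mul_nonpos_of_nonneg_of_nonpos hx (sub_nonpos.2 (sigmoid_le (by linarith)))
  · exact mul_nonpos_of_nonpos_of_nonneg hx (sub_nonneg.2 (sigmoid_le (by linarith)))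

lemma abs_one_sub_two_mul_sigmoid_le_one (x : ℝ) : |1 - 2 * sigmoid x| ≤ 1 := by
  rw [abs_le]
  constructor <;> linarith [sigmoid_pos x, sigmoid_lt_one x]

end Real

lemma sigmoid_eq_real_sigmoid : sigmoid = Real.sigmoid := by
  funext x
  rw [sigmoid, Real.sigmoid_def, one_div]

lemma SiLU_eq_mul_sigmoid : SiLU = fun x => x * Real.sigmoid x := by
  funext x
  rw [SiLU, sigmoid_eq_real_sigmoid]

lemma hasDerivAt_SiLU (x : ℝ) :
    HasDerivAt SiLU (Real.sigmoid x + x * (Real.sigmoid x * (1 - Real.sigmoid x))) x := by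
  rw [SiLU_eq_mul_sigmoid]
  exact ((hasDerivAt_id x).mul (Real.hasDerivAt_sigmoid x)).congr_deriv (by rw [id, one_mul])

lemma deriv_deriv_SiLU (x : ℝ) :
    deriv (deriv SiLU) x =
      Real.sigmoid x * (1 - Real.sigmoid x) * (2 + x * (1 - 2 * Real.sigmoid x)) := by
  have hσ := Real.hasDerivAt_sigmoid x
  rw [funext fun y => (hasDerivAt_SiLU y).deriv]
  refine (hσ.add ((hasDerivAt_id x).mul (hσ.mul (hσ.const_sub 1)))).deriv.trans ?_
  simp only [id, Pi.mul_apply]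
  ring

/-- SiLU has uniformly bounded (low) curvature: `|SiLU″(x)| ≤ 1` for every `x`. -/
theorem silu_second_derivative_bounded (x : ℝ) :
    |deriv (deriv SiLU) x| ≤ 1 := by
  rw [deriv_deriv_SiLU]
  set p := Real.sigmoid x * (1 - Real.sigmoid x)
  set y := x * (1 - 2 * Real.sigmoid x)
  have hp_nonneg : 0 ≤ p :=
    mul_nonneg (Real.sigmoid_pos x).le (sub_nonneg.2 (Real.sigmoid_le_one x))
  have hp_le : p ≤ 1 / 4 := Real.sigmoid_mul_one_sub_le_quarter x
  have hy_nonpos : y ≤ 0 := Real.mul_one_sub_two_mul_sigmoid_nonpos x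
  have hy_abs : |y| ≤ |x| := by
    simpa [y, abs_mul] using
      mul_le_mul_of_nonneg_left (Real.abs_one_sub_two_mul_sigmoid_le_one x) (abs_nonneg x)
  have hpx : p * |x| ≤ 1 :=
    calc p * |x| ≤ Real.exp (-|x|) * |x| := by
          gcongr
          exact Real.sigmoid_mul_one_sub_le_exp_neg_abs x
      _ ≤ Real.exp (-1) := by rw [mul_comm]; exact Real.mul_exp_neg_le_exp_neg_one _
      _ ≤ 1 := Real.exp_le_one_iff.2 (by norm_num)
  have hpy : p * -y ≤ 1 :=
    calc p * -y = p * |y| := by rw [abs_of_nonpos hy_nonpos]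
      _ ≤ p * |x| := by gcongr
      _ ≤ 1 := hpx
  rw [abs_le]
  constructor <;> nlinarith
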